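/- arXiv:1411.6304 — 3 statements merged into one kernel-verified Lean document; each statement's English description precedes it below -/
import Mathlib

section
/- Let λ>0, μ>0 and let z:[0,∞)→ℂ be measurable with μ‖z‖_λ < λ. Then there exists a unique map Θ:[0,∞)×ℝ×ℝ→ℝ with ‖Θ(t,ϑ,ω) − ϑ − ωt‖_λ < ∞ which is an asymptotic characteristic for z, and it satisfies ‖Θ(t,ϑ,ω) − ϑ − ωt‖_λ ≤ (μ/λ)‖z‖_λ. -/
open MeasureTheory

noncomputable section

/-- Weighted sup-norm `sup_{t ≥ 0} |z t| e^{l t}` for `z : ℝ → ℂ`. -/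
def expNormZ (l : ℝ) (z : ℝ → ℂ) : ℝ :=
  ⨆ t : {t : ℝ // 0 ≤ t}, ‖z t.1‖ * Real.exp (l * t.1)

/-- Finiteness of the weighted sup-norm for `z : ℝ → ℂ`. -/
def ExpBddZ (l : ℝ) (z : ℝ → ℂ) : Prop :=
  BddAbove (Set.range fun t : {t : ℝ // 0 ≤ t} => ‖z t.1‖ * Real.exp (l * t.1))

/-- Weighted sup-norm `sup_{t ≥ 0, ϑ, ω} |h t ϑ ω| e^{l t}`. -/
def expNormH (l : ℝ) (h : ℝ → ℝ → ℝ → ℂ) : ℝ :=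
  ⨆ p : {t : ℝ // 0 ≤ t} × ℝ × ℝ, ‖h p.1.1 p.2.1 p.2.2‖ * Real.exp (l * p.1.1)

/-- Finiteness of the weighted sup-norm for `h`. -/
def ExpBddH (l : ℝ) (h : ℝ → ℝ → ℝ → ℂ) : Prop :=
  BddAbove (Set.range fun p : {t : ℝ // 0 ≤ t} × ℝ × ℝ =>
    ‖h p.1.1 p.2.1 p.2.2‖ * Real.exp (l * p.1.1))

/-- `Θ` is an asymptotic characteristic for the order parameter `z`, with coupling `μ`:
`Θ(t,ϑ,ω) = ϑ + ωt + μ ∫_t^∞ Im(e^{iΘ(s,ϑ,ω)} conj(z s)) ds` for all `t ≥ 0`. -/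
def IsAsymChar (μ : ℝ) (z : ℝ → ℂ) (Θ : ℝ → ℝ → ℝ → ℝ) : Prop :=
  ∀ t : ℝ, 0 ≤ t → ∀ ϑ ω : ℝ,
    Θ t ϑ ω = ϑ + ω * t + μ * ∫ s in Set.Ioi t,
      (Complex.exp (Complex.I * (Θ s ϑ ω : ℂ)) * (starRingEnd ℂ) (z s)).im

/-!
Write `Θ(t,ϑ,ω) = ϑ + ωt + u(t)`. Then `Θ` is an asymptotic characteristic iff `u` is a fixed
point of `u ↦ μ ∫_t^∞ Im(e^{i(ϑ+ωs+u(s))} conj z(s)) ds`. The integrand is `|z(s)|`-Lipschitz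
in the phase and `∫_t^∞ |z| ≤ ‖z‖_λ e^{-λt}/λ`, so this map is a contraction of the sup norm
with constant `μ‖z‖_λ/λ < 1`; its fixed point gives `Θ`. The same integral bound shows that every
characteristic satisfies `e^{λt}|Θ - ϑ - ωt| ≤ μ‖z‖_λ/λ`, so every characteristic is bounded and
hence is the fixed point too.

A characteristic is not assumed measurable in `t`, and a nonintegrable integrand has Bochner
integral `0`. But then `Θ(t) = ϑ + ωt` at every `t` where the integrand fails to be measurable
on `Ioi t`, and this forces the integrand to be measurable on `Ioi 0` after all.
-/

open Set Real
open scoped BoundedContinuousFunction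

section RealLine

variable {ν : Measure ℝ} [NullSingletonClass ν]

theorem aestronglyMeasurable_restrict_Ioi_of_eq_of_not {β : Type*} [TopologicalSpace β]
    [TopologicalSpace.PseudoMetrizableSpace β] {f g : ℝ → β} {a : ℝ}
    (hg : AEStronglyMeasurable g (ν.restrict (Ioi a)))
    (hfg : ∀ t, a < t → ¬AEStronglyMeasurable f (ν.restrict (Ioi t)) → f t = g t) :
    AEStronglyMeasurable f (ν.restrict (Ioi a)) := by
  set G := {t | a ≤ t ∧ AEStronglyMeasurable f (ν.restrict (Ioi t))}
  have mono {s t : ℝ} (hst : s ≤ t) (hs : AEStronglyMeasurable f (ν.restrict (Ioi s))) :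
      AEStronglyMeasurable f (ν.restrict (Ioi t)) :=
    hs.mono_measure (Measure.restrict_mono (Ioi_subset_Ioi hst) le_rfl)
  have eq_of_not_mem {t : ℝ} (hat : a < t) (ht : t ∉ G) : f t = g t :=
    hfg t hat fun h => ht ⟨hat.le, h⟩
  rcases G.eq_empty_or_nonempty with hG | hG
  · refine hg.congr <| (ae_restrict_iff' measurableSet_Ioi).2 <| .of_forall fun t ht =>
      (eq_of_not_mem ht (hG ▸ notMem_empty t)).symm
  have hτ : a ≤ sInf G := le_csInf hG fun t ht => ht.1
  have below : AEStronglyMeasurable f (ν.restrict (Ioo a (sInf G))) :=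
    (hg.mono_set Ioo_subset_Ioi_self).congr <| (ae_restrict_iff' measurableSet_Ioo).2 <|
      .of_forall fun t ht => (eq_of_not_mem ht.1 fun htG =>
        not_lt_of_ge (csInf_le ⟨a, fun s hs => hs.1⟩ htG) ht.2).symm
  -- `sInf G` need not lie in `G`, but `Ioi (sInf G)` is a countable union of sets `Ioi t`, `t ∈ G`
  have above : AEStronglyMeasurable f (ν.restrict (Ioi (sInf G))) := by
    obtain ⟨u, -, hu_gt, hu⟩ := exists_seq_strictAnti_tendsto (sInf G)
    have hU : Ioi (sInf G) = ⋃ n, Ioi (u n) := by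
      refine (iUnion_subset fun n => Ioi_subset_Ioi (hu_gt n).le).antisymm' fun t ht => ?_
      obtain ⟨n, hn⟩ := (hu.eventually (gt_mem_nhds ht)).exists
      exact mem_iUnion.2 ⟨n, hn⟩
    rw [hU, aestronglyMeasurable_iUnion_iff]
    intro n
    obtain ⟨t, htG, htu⟩ := exists_lt_of_csInf_lt hG (hu_gt n)
    exact mono htu.le htG.2
  rw [← Ioc_union_Ioi_eq_Ioi hτ, aestronglyMeasurable_union_iff,
    Measure.restrict_congr_set Ioo_ae_eq_Ioc.symm]
  exact ⟨below, above⟩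

variable {E : Type*} [NormedAddCommGroup E] [NormedSpace ℝ E]

theorem MeasureTheory.Integrable.continuous_setIntegral_Ioi {h : ℝ → E} (hh : Integrable h ν) :
    Continuous fun t => ∫ x in Ioi t, h x ∂ν := by
  refine ((continuous_const (y := ∫ x in Ioi 0, h x ∂ν)).sub
    (hh.continuous_primitive 0)).congr fun t => ?_
  rw [Pi.sub_apply, ← intervalIntegral.integral_Ioi_sub_Ioi' hh.integrableOn hh.integrableOn,
    sub_sub_cancel]

theorem MeasureTheory.IntegrableOn.continuous_setIntegral_Ioi_max {h : ℝ → E} {a : ℝ}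
    (hh : IntegrableOn h (Ioi a) ν) : Continuous fun t => ∫ x in Ioi (max t a), h x ∂ν := by
  refine ((integrable_indicator_iff measurableSet_Ioi).2 hh).continuous_setIntegral_Ioi.congr
    fun t => ?_
  rw [setIntegral_indicator measurableSet_Ioi, Ioi_inter_Ioi]

end RealLine

theorem abs_setIntegral_Ioi_le_of_le_exp {g : ℝ → ℝ} {C l t : ℝ} (hl : 0 < l)
    (hg : ∀ s, t < s → |g s| ≤ C * exp (-l * s)) :
    |∫ s in Ioi t, g s| ≤ C * exp (-l * t) / l := by
  have hl' : -l < 0 := neg_neg_of_pos hl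
  calc |∫ s in Ioi t, g s| = ‖∫ s in Ioi t, g s‖ := (norm_eq_abs _).symm
    _ ≤ ∫ s in Ioi t, C * exp (-l * s) :=
        norm_integral_le_of_norm_le ((integrableOn_exp_mul_Ioi hl' t).const_mul C)
          ((ae_restrict_iff' measurableSet_Ioi).2 (.of_forall fun s hs => hg s hs))
    _ = C * exp (-l * t) / l := by
        rw [integral_const_mul, integral_exp_mul_Ioi hl', div_neg, neg_div, neg_neg, mul_div_assoc]

def charIntegrand (z : ℝ → ℂ) (a s : ℝ) : ℝ :=
  (Complex.exp (Complex.I * a) * starRingEnd ℂ (z s)).im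

section Characteristic

variable {l μ K : ℝ} {z : ℝ → ℂ} {Θ : ℝ → ℝ → ℝ → ℝ}

theorem abs_charIntegrand_le (a s : ℝ) : |charIntegrand z a s| ≤ ‖z s‖ :=
  (Complex.abs_im_le_norm _).trans_eq <| by
    rw [norm_mul, Complex.norm_exp_I_mul_ofReal, one_mul, Complex.norm_conj]

theorem abs_charIntegrand_sub_le (a b s : ℝ) :
    |charIntegrand z a s - charIntegrand z b s| ≤ |a - b| * ‖z s‖ := by
  have hexp : Complex.exp (Complex.I * a) - Complex.exp (Complex.I * b) =
      Complex.exp (Complex.I * b) * (Complex.exp (Complex.I * (a - b : ℝ)) - 1) := by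
    rw [mul_sub, ← Complex.exp_add, mul_one]; push_cast; ring_nf
  calc |charIntegrand z a s - charIntegrand z b s|
      = |((Complex.exp (Complex.I * a) - Complex.exp (Complex.I * b)) *
          starRingEnd ℂ (z s)).im| := by
        rw [sub_mul, Complex.sub_im]; rfl
    _ ≤ ‖Complex.exp (Complex.I * (a - b : ℝ)) - 1‖ * ‖z s‖ := by
        refine (Complex.abs_im_le_norm _).trans_eq ?_
        rw [hexp, norm_mul, norm_mul, Complex.norm_exp_I_mul_ofReal, one_mul, Complex.norm_conj]
    _ ≤ |a - b| * ‖z s‖ := by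
        gcongr; exact norm_exp_I_mul_ofReal_sub_one_le

theorem Measurable.charIntegrand (hz : Measurable z) {a : ℝ → ℝ} (ha : Measurable a) :
    Measurable fun s => charIntegrand z (a s) s := by
  unfold _root_.charIntegrand; fun_prop

theorem IsAsymChar.apply_eq (hΘ : IsAsymChar μ z Θ) {t : ℝ} (ht : 0 ≤ t) (ϑ ω : ℝ) :
    Θ t ϑ ω = ϑ + ω * t + μ * ∫ s in Ioi t, charIntegrand z (Θ s ϑ ω) s :=
  hΘ t ht ϑ ω

theorem IsAsymChar.aestronglyMeasurable_charIntegrand (hΘ : IsAsymChar μ z Θ)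
    (hz : Measurable z) (ϑ ω : ℝ) :
    AEStronglyMeasurable (fun s => charIntegrand z (Θ s ϑ ω) s) (volume.restrict (Ioi 0)) := by
  refine aestronglyMeasurable_restrict_Ioi_of_eq_of_not
    (hz.charIntegrand (a := fun s => ϑ + ω * s) (by fun_prop)).aestronglyMeasurable
    fun t ht hbad => ?_
  rw [hΘ.apply_eq ht.le, integral_undef fun h => hbad h.aestronglyMeasurable, mul_zero, add_zero]

theorem norm_le_expNormZ_mul_exp (hz : ExpBddZ l z) {s : ℝ} (hs : 0 ≤ s) :
    ‖z s‖ ≤ expNormZ l z * exp (-l * s) := by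
  calc ‖z s‖ = ‖z s‖ * exp (l * s) * exp (-l * s) := by
        rw [mul_assoc, ← exp_add, neg_mul, add_neg_cancel, exp_zero, mul_one]
    _ ≤ expNormZ l z * exp (-l * s) := by
        gcongr; exact le_ciSup hz (⟨s, hs⟩ : {t : ℝ // 0 ≤ t})

theorem nonneg_of_norm_le_mul_exp (hK : ∀ s, 0 ≤ s → ‖z s‖ ≤ K * exp (-l * s)) : 0 ≤ K := by
  simpa using (norm_nonneg _).trans (hK 0 le_rfl)

theorem abs_integral_charIntegrand_le (hl : 0 < l) (hK : ∀ s, 0 ≤ s → ‖z s‖ ≤ K * exp (-l * s))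
    (a : ℝ → ℝ) {t : ℝ} (ht : 0 ≤ t) :
    |∫ s in Ioi t, charIntegrand z (a s) s| ≤ K * exp (-l * t) / l :=
  abs_setIntegral_Ioi_le_of_le_exp hl fun s hs =>
    (abs_charIntegrand_le _ s).trans (hK s (ht.trans hs.le))

theorem integrableOn_charIntegrand (hl : 0 < l) (hK : ∀ s, 0 ≤ s → ‖z s‖ ≤ K * exp (-l * s))
    {a : ℝ → ℝ}
    (ha : AEStronglyMeasurable (fun s => charIntegrand z (a s) s) (volume.restrict (Ioi 0))) :
    IntegrableOn (fun s => charIntegrand z (a s) s) (Ioi 0) :=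
  ((integrableOn_exp_mul_Ioi (neg_neg_of_pos hl) 0).const_mul K).mono' ha <|
    (ae_restrict_iff' measurableSet_Ioi).2 <| .of_forall fun s hs =>
      (abs_charIntegrand_le _ s).trans (hK s (le_of_lt hs))

theorem abs_integral_charIntegrand_sub_le (hl : 0 < l)
    (hK : ∀ s, 0 ≤ s → ‖z s‖ ≤ K * exp (-l * s)) (hz : Measurable z) {a b : ℝ → ℝ}
    (ha : Measurable a) (hb : Measurable b) {C : ℝ} (hab : ∀ s, |a s - b s| ≤ C) {t : ℝ}
    (ht : 0 ≤ t) :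
    |(∫ s in Ioi t, charIntegrand z (a s) s) - ∫ s in Ioi t, charIntegrand z (b s) s| ≤
      C * K * exp (-l * t) / l := by
  have hint {c : ℝ → ℝ} (hc : Measurable c) :
      IntegrableOn (fun s => charIntegrand z (c s) s) (Ioi t) :=
    (integrableOn_charIntegrand hl hK (hz.charIntegrand hc).aestronglyMeasurable).mono_set
      (Ioi_subset_Ioi ht)
  rw [← integral_sub (hint ha) (hint hb)]
  refine abs_setIntegral_Ioi_le_of_le_exp hl fun s hs => ?_
  calc |charIntegrand z (a s) s - charIntegrand z (b s) s| ≤ |a s - b s| * ‖z s‖ :=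
        abs_charIntegrand_sub_le _ _ s
    _ ≤ C * (K * exp (-l * s)) :=
        mul_le_mul (hab s) (hK s (ht.trans hs.le)) (norm_nonneg _) ((abs_nonneg _).trans (hab s))
    _ = C * K * exp (-l * s) := (mul_assoc _ _ _).symm

/-- Integrating from `max t 0` instead of `t` makes `charMap` preserve bounded continuous
functions on all of `ℝ`; only its values for `t ≥ 0` matter. -/
def charMap (μ : ℝ) (z : ℝ → ℂ) (ϑ ω : ℝ) (u : ℝ → ℝ) (t : ℝ) : ℝ :=
  μ * ∫ s in Ioi (max t 0), charIntegrand z (ϑ + ω * s + u s) s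

theorem isAsymChar_of_charMap_eq {u : ℝ → ℝ → ℝ → ℝ}
    (hu : ∀ ϑ ω, charMap μ z ϑ ω (u ϑ ω) = u ϑ ω) :
    IsAsymChar μ z fun t ϑ ω => ϑ + ω * t + u ϑ ω t := by
  intro t ht ϑ ω
  dsimp only
  conv_lhs => rw [← hu ϑ ω]
  rw [charMap, max_eq_left ht]
  rfl

theorem exp_neg_mul_max_le_one (hl : 0 ≤ l) (t : ℝ) : exp (-l * max t 0) ≤ 1 :=
  exp_le_one_iff.2 <| mul_nonpos_of_nonpos_of_nonneg (neg_nonpos.2 hl) (le_max_right t 0)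

theorem IsAsymChar.abs_sub_mul_exp_le (hl : 0 < l) (hK : ∀ s, 0 ≤ s → ‖z s‖ ≤ K * exp (-l * s))
    (hμ : 0 ≤ μ) (hΘ : IsAsymChar μ z Θ) {t : ℝ} (ht : 0 ≤ t) (ϑ ω : ℝ) :
    |Θ t ϑ ω - ϑ - ω * t| * exp (l * t) ≤ μ * K / l := by
  have hcancel (x : ℝ) : ϑ + ω * t + x - ϑ - ω * t = x := by ring
  rw [hΘ.apply_eq ht, hcancel, abs_mul, abs_of_nonneg hμ]
  calc μ * |∫ s in Ioi t, charIntegrand z (Θ s ϑ ω) s| * exp (l * t)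
      ≤ μ * (K * exp (-l * t) / l) * exp (l * t) := by
        gcongr; exact abs_integral_charIntegrand_le hl hK _ ht
    _ = μ * K / l := by
        rw [neg_mul, exp_neg]; field_simp

theorem IsAsymChar.expBddH (hl : 0 < l) (hK : ∀ s, 0 ≤ s → ‖z s‖ ≤ K * exp (-l * s))
    (hμ : 0 ≤ μ) (hΘ : IsAsymChar μ z Θ) :
    ExpBddH l fun t ϑ ω => ((Θ t ϑ ω - ϑ - ω * t : ℝ) : ℂ) := by
  refine ⟨μ * K / l, Set.forall_mem_range.2 fun p => ?_⟩
  simpa only [Complex.norm_real, Real.norm_eq_abs]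
    using hΘ.abs_sub_mul_exp_le hl hK hμ p.1.2 p.2.1 p.2.2

theorem IsAsymChar.expNormH_le (hl : 0 < l) (hK : ∀ s, 0 ≤ s → ‖z s‖ ≤ K * exp (-l * s))
    (hμ : 0 ≤ μ) (hΘ : IsAsymChar μ z Θ) :
    expNormH l (fun t ϑ ω => ((Θ t ϑ ω - ϑ - ω * t : ℝ) : ℂ)) ≤ μ / l * K := by
  have hK0 := nonneg_of_norm_le_mul_exp hK
  rw [div_mul_eq_mul_div]
  refine Real.iSup_le (fun p => ?_) (by positivity)
  simpa only [Complex.norm_real, Real.norm_eq_abs]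
    using hΘ.abs_sub_mul_exp_le hl hK hμ p.1.2 p.2.1 p.2.2

theorem abs_charMap_le (hl : 0 < l) (hK : ∀ s, 0 ≤ s → ‖z s‖ ≤ K * exp (-l * s))
    (hμ : 0 ≤ μ) (ϑ ω : ℝ) (u : ℝ → ℝ) (t : ℝ) : |charMap μ z ϑ ω u t| ≤ μ * K / l := by
  have hK0 := nonneg_of_norm_le_mul_exp hK
  calc |charMap μ z ϑ ω u t|
      = μ * |∫ s in Ioi (max t 0), charIntegrand z (ϑ + ω * s + u s) s| := by
        rw [charMap, abs_mul, abs_of_nonneg hμ]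
    _ ≤ μ * (K * exp (-l * max t 0) / l) := by
        gcongr; exact abs_integral_charIntegrand_le hl hK _ (le_max_right t 0)
    _ ≤ μ * (K * 1 / l) := by gcongr; exact exp_neg_mul_max_le_one hl.le t
    _ = μ * K / l := by ring

theorem continuous_charMap (hl : 0 < l) (hK : ∀ s, 0 ≤ s → ‖z s‖ ≤ K * exp (-l * s))
    {ϑ ω : ℝ} {u : ℝ → ℝ}
    (hu : AEStronglyMeasurable (fun s => charIntegrand z (ϑ + ω * s + u s) s)
      (volume.restrict (Ioi 0))) :
    Continuous (charMap μ z ϑ ω u) :=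
  continuous_const.mul (integrableOn_charIntegrand hl hK hu).continuous_setIntegral_Ioi_max

theorem dist_charMap_le (hl : 0 < l) (hK : ∀ s, 0 ≤ s → ‖z s‖ ≤ K * exp (-l * s))
    (hμ : 0 ≤ μ) (hz : Measurable z) (ϑ ω : ℝ) (u v : ℝ →ᵇ ℝ) (t : ℝ) :
    dist (charMap μ z ϑ ω u t) (charMap μ z ϑ ω v t) ≤ μ * K / l * dist u v := by
  have hK0 := nonneg_of_norm_le_mul_exp hK
  have huv (s : ℝ) : |ϑ + ω * s + u s - (ϑ + ω * s + v s)| ≤ dist u v := by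
    rw [add_sub_add_left_eq_sub, ← Real.dist_eq]; exact u.dist_coe_le_dist s
  calc dist (charMap μ z ϑ ω u t) (charMap μ z ϑ ω v t)
      = μ * |(∫ s in Ioi (max t 0), charIntegrand z (ϑ + ω * s + u s) s) -
          ∫ s in Ioi (max t 0), charIntegrand z (ϑ + ω * s + v s) s| := by
        rw [dist_eq, charMap, charMap, ← mul_sub, abs_mul, abs_of_nonneg hμ]
    _ ≤ μ * (dist u v * K * exp (-l * max t 0) / l) := by
        gcongr
        exact abs_integral_charIntegrand_sub_le hl hK hz (by fun_prop) (by fun_prop) huv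
          (le_max_right t 0)
    _ ≤ μ * (dist u v * K * 1 / l) := by gcongr; exact exp_neg_mul_max_le_one hl.le t
    _ = μ * K / l * dist u v := by ring

theorem existsUnique_charMap_eq (hl : 0 < l) (hK : ∀ s, 0 ≤ s → ‖z s‖ ≤ K * exp (-l * s))
    (hμ : 0 ≤ μ) (hz : Measurable z) (hsmall : μ * K < l) (ϑ ω : ℝ) :
    ∃! u : ℝ →ᵇ ℝ, charMap μ z ϑ ω u = u := by
  have hC : 0 ≤ μ * K / l := div_nonneg (mul_nonneg hμ (nonneg_of_norm_le_mul_exp hK)) hl.le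
  let F (u : ℝ →ᵇ ℝ) : ℝ →ᵇ ℝ := .ofNormedAddCommGroup (charMap μ z ϑ ω u)
    (continuous_charMap hl hK (hz.charIntegrand (by fun_prop)).aestronglyMeasurable)
    (μ * K / l) (abs_charMap_le hl hK hμ ϑ ω u)
  have hF : ContractingWith ⟨μ * K / l, hC⟩ F :=
    ⟨(div_lt_one hl).2 hsmall, LipschitzWith.of_dist_le_mul fun u v =>
      (BoundedContinuousFunction.dist_le (mul_nonneg hC dist_nonneg)).2
        (dist_charMap_le hl hK hμ hz ϑ ω u v)⟩
  exact ⟨hF.fixedPoint F, congrArg DFunLike.coe hF.fixedPoint_isFixedPt,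
    fun v hv => hF.fixedPoint_unique (DFunLike.coe_injective hv)⟩

theorem IsAsymChar.exists_charMap_eq (hl : 0 < l) (hK : ∀ s, 0 ≤ s → ‖z s‖ ≤ K * exp (-l * s))
    (hμ : 0 ≤ μ) (hz : Measurable z) (hΘ : IsAsymChar μ z Θ) (ϑ ω : ℝ) :
    ∃ v : ℝ →ᵇ ℝ, charMap μ z ϑ ω v = v ∧ ∀ t, 0 ≤ t → Θ t ϑ ω = ϑ + ω * t + v t := by
  set v : ℝ → ℝ := fun t => Θ (max t 0) ϑ ω - ϑ - ω * max t 0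
  have hΘv {s : ℝ} (hs : 0 ≤ s) : ϑ + ω * s + v s = Θ s ϑ ω := by
    simp only [v, max_eq_left hs]; ring
  have hv : charMap μ z ϑ ω v = v := funext fun t => by
    rw [charMap, setIntegral_congr_fun measurableSet_Ioi fun s hs =>
      congrArg (charIntegrand z · s) (hΘv ((le_max_right t 0).trans hs.le))]
    simp only [v]
    rw [hΘ.apply_eq (le_max_right t 0)]
    ring
  have hcont : Continuous v := hv ▸ continuous_charMap hl hK <|
    (hΘ.aestronglyMeasurable_charIntegrand hz ϑ ω).congr <|
      (ae_restrict_iff' measurableSet_Ioi).2 <| .of_forall fun s hs =>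
        congrArg (charIntegrand z · s) (hΘv (le_of_lt hs)).symm
  refine ⟨.ofNormedAddCommGroup v hcont (μ * K / l) fun t => ?_, hv, fun t ht => (hΘv ht).symm⟩
  rw [← hv]
  exact abs_charMap_le hl hK hμ ϑ ω v t

end Characteristic

/-- Existence and uniqueness of the asymptotic characteristic for `z`, with the
bound `‖Θ - ϑ - ωt‖_λ ≤ (μ/λ)‖z‖_λ`. -/
theorem asymChar_exists_unique_exp
    (l μ : ℝ) (hl : 0 < l) (hμ : 0 < μ) (z : ℝ → ℂ) (hz : Measurable z)
    (hzb : ExpBddZ l z) (hsmall : μ * expNormZ l z < l) :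
    ∃ Θ : ℝ → ℝ → ℝ → ℝ,
      ExpBddH l (fun t ϑ ω => ((Θ t ϑ ω - ϑ - ω * t : ℝ) : ℂ)) ∧
      IsAsymChar μ z Θ ∧
      expNormH l (fun t ϑ ω => ((Θ t ϑ ω - ϑ - ω * t : ℝ) : ℂ)) ≤ μ / l * expNormZ l z ∧
      ∀ Θ' : ℝ → ℝ → ℝ → ℝ,
        ExpBddH l (fun t ϑ ω => ((Θ' t ϑ ω - ϑ - ω * t : ℝ) : ℂ)) →
        IsAsymChar μ z Θ' →
        ∀ t : ℝ, 0 ≤ t → ∀ ϑ ω : ℝ, Θ' t ϑ ω = Θ t ϑ ω := by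
  have hK (s : ℝ) (hs : 0 ≤ s) := norm_le_expNormZ_mul_exp hzb hs
  choose u hu huniq using existsUnique_charMap_eq hl hK hμ.le hz hsmall
  have hΘ := isAsymChar_of_charMap_eq (u := fun ϑ ω => u ϑ ω) hu
  refine ⟨_, hΘ.expBddH hl hK hμ.le, hΘ, hΘ.expNormH_le hl hK hμ.le,
    fun Θ' _ hΘ' t ht ϑ ω => ?_⟩
  obtain ⟨v, hv, hΘ'v⟩ := hΘ'.exists_charMap_eq hl hK hμ.le hz ϑ ω
  rw [hΘ'v t ht, huniq ϑ ω v hv]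
end
end

section
/- Let λ>0, μ>0 and let z, z':[0,∞)→ℂ be measurable with ‖z‖_λ < ∞, ‖z'‖_λ < ∞ and μ‖z‖_λ < λ. Let Θ and Θ' be asymptotic characteristics for z and z' respectively, with ‖Θ(t,ϑ,ω) − ϑ − ωt‖_λ < ∞ and ‖Θ'(t,ϑ,ω) − ϑ − ωt‖_λ < ∞. Then ‖Θ − Θ'‖_λ ≤ μ‖z − z'‖_λ / (λ(1 − (μ/λ)‖z‖_λ)). -/
open MeasureTheory

noncomputable section

/-!
Write `D = ‖Θ - Θ'‖_λ`, `Z = ‖z‖_λ` and `W = ‖z - z'‖_λ`; `D` is finite by the a priori bounds on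
`Θ - ϑ - ωt` and `Θ' - ϑ - ωt`. Subtracting the two integral equations and using
`|Im(e^{iθ} w̄) - Im(e^{iθ'} w̄')| ≤ |θ - θ'| ‖w‖ + ‖w - w'‖` bounds the integrand at `s ≥ 0` by
`D e^{-λs} Z e^{-λs} + W e^{-λs} ≤ (DZ + W) e^{-λs}`. Integrating over `(t, ∞)` gives
`D ≤ μ (DZ + W) / λ`, which can be solved for `D` because `μZ < λ`.
-/

open Set Filter

section WeightedNorm

variable {l : ℝ}

lemma bddAbove_range_norm_sub_mul {ι E : Type*} [SeminormedAddCommGroup E] {u v : ι → E}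
    {w : ι → ℝ} (hw : ∀ i, 0 ≤ w i) (hu : BddAbove (range fun i => ‖u i‖ * w i))
    (hv : BddAbove (range fun i => ‖v i‖ * w i)) :
    BddAbove (range fun i => ‖u i - v i‖ * w i) := by
  obtain ⟨A, hA⟩ := hu
  obtain ⟨B, hB⟩ := hv
  refine ⟨A + B, forall_mem_range.2 fun i => ?_⟩
  calc ‖u i - v i‖ * w i ≤ (‖u i‖ + ‖v i‖) * w i := by gcongr; exacts [hw i, norm_sub_le _ _]
    _ ≤ A + B := by rw [add_mul]; exact add_le_add (hA ⟨i, rfl⟩) (hB ⟨i, rfl⟩)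

lemma ExpBddZ.sub {z z' : ℝ → ℂ} (hz : ExpBddZ l z) (hz' : ExpBddZ l z') :
    ExpBddZ l (fun t => z t - z' t) :=
  bddAbove_range_norm_sub_mul (fun _ => (Real.exp_pos _).le) hz hz'

lemma ExpBddH.sub {h h' : ℝ → ℝ → ℝ → ℂ} (hh : ExpBddH l h) (hh' : ExpBddH l h') :
    ExpBddH l (fun t ϑ ω => h t ϑ ω - h' t ϑ ω) :=
  bddAbove_range_norm_sub_mul (fun _ => (Real.exp_pos _).le) hh hh'

lemma ExpBddZ.norm_le {z : ℝ → ℂ} (hz : ExpBddZ l z) {t : ℝ} (ht : 0 ≤ t) :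
    ‖z t‖ ≤ expNormZ l z * Real.exp (-l * t) := by
  rw [neg_mul, Real.exp_neg, ← div_eq_mul_inv, le_div_iff₀ (Real.exp_pos _)]
  exact le_ciSup hz (⟨t, ht⟩ : {t : ℝ // 0 ≤ t})

lemma ExpBddH.norm_le {h : ℝ → ℝ → ℝ → ℂ} (hh : ExpBddH l h) {t : ℝ} (ht : 0 ≤ t) (ϑ ω : ℝ) :
    ‖h t ϑ ω‖ ≤ expNormH l h * Real.exp (-l * t) := by
  rw [neg_mul, Real.exp_neg, ← div_eq_mul_inv, le_div_iff₀ (Real.exp_pos _)]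
  exact le_ciSup hh (⟨⟨t, ht⟩, ϑ, ω⟩ : {t : ℝ // 0 ≤ t} × ℝ × ℝ)

lemma expNormH_le {h : ℝ → ℝ → ℝ → ℂ} {B : ℝ}
    (hB : ∀ t, 0 ≤ t → ∀ ϑ ω, ‖h t ϑ ω‖ * Real.exp (l * t) ≤ B) : expNormH l h ≤ B :=
  haveI : Nonempty ({t : ℝ // 0 ≤ t} × ℝ × ℝ) := ⟨⟨⟨0, le_rfl⟩, 0, 0⟩⟩
  ciSup_le fun p => hB p.1.1 p.1.2 p.2.1 p.2.2

end WeightedNorm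

section TailIntegrals

variable {E : Type*} [NormedAddCommGroup E]

lemma aestronglyMeasurable_restrict_Ioi_of_forall_gt {μ : Measure ℝ} [NullSingletonClass μ]
    {f : ℝ → E} {c : ℝ} (hf : ∀ s > c, AEStronglyMeasurable f (μ.restrict (Ioi s))) :
    AEStronglyMeasurable f (μ.restrict (Ioi c)) := by
  have hU : ⋃ n : ℕ, Ici (c + 1 / (n + 1)) = Ioi c :=
    iUnion_Ici_eq_Ioi_of_lt_of_tendsto (fun n => by simp only [lt_add_iff_pos_right]; positivity)
      (F := atTop)
      (by simpa using (tendsto_one_div_add_atTop_nhds_zero_nat (𝕜 := ℝ)).const_add c)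
  rw [← hU, aestronglyMeasurable_iUnion_iff]
  intro n
  rw [← Measure.restrict_congr_set Ioi_ae_eq_Ici]
  exact hf _ (by simp only [gt_iff_lt, lt_add_iff_pos_right]; positivity)

lemma integrableOn_Ioi_of_eq_of_not_integrableOn {f g : ℝ → E} {bound : ℝ → ℝ} {a : ℝ}
    (hbound : IntegrableOn bound (Ioi a)) (hf : ∀ s > a, ‖f s‖ ≤ bound s)
    (hg : AEStronglyMeasurable g (volume.restrict (Ioi a)))
    (hfg : ∀ s > a, ¬ IntegrableOn f (Ioi s) → f s = g s) : IntegrableOn f (Ioi a) := by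
  suffices AEStronglyMeasurable f (volume.restrict (Ioi a)) from
    hbound.mono' this ((ae_restrict_iff' measurableSet_Ioi).2 (Eventually.of_forall hf))
  have of_eqOn {T : Set ℝ} (hT : T ⊆ Ioi a) (hTm : MeasurableSet T)
      (hnot : ∀ s ∈ T, ¬ IntegrableOn f (Ioi s)) : AEStronglyMeasurable f (volume.restrict T) :=
    (hg.mono_set hT).congr ((ae_restrict_iff' hTm).2
      (Eventually.of_forall fun s hs => (hfg s (hT hs) (hnot s hs)).symm))
  -- The points with integrable tail form a ray above `sInf S`; below it `f = g`.
  set S := {s | a < s ∧ IntegrableOn f (Ioi s)}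
  rcases S.eq_empty_or_nonempty with hS | hS
  · exact of_eqOn subset_rfl measurableSet_Ioi fun s hs hint =>
      eq_empty_iff_forall_notMem.1 hS s ⟨hs, hint⟩
  have hbdd : BddBelow S := ⟨a, fun s hs => hs.1.le⟩
  have hlow : AEStronglyMeasurable f (volume.restrict (Ioo a (sInf S))) :=
    of_eqOn Ioo_subset_Ioi_self measurableSet_Ioo fun s hs hint =>
      (csInf_le hbdd ⟨hs.1, hint⟩).not_gt hs.2
  have hhigh : AEStronglyMeasurable f (volume.restrict (Ici (sInf S))) := by
    rw [← Measure.restrict_congr_set Ioi_ae_eq_Ici]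
    refine aestronglyMeasurable_restrict_Ioi_of_forall_gt fun s hs => ?_
    obtain ⟨u, huS, hus⟩ := exists_lt_of_csInf_lt hS hs
    exact (huS.2.mono_set (Ioi_subset_Ioi hus.le)).aestronglyMeasurable
  refine (aestronglyMeasurable_union_iff.2 ⟨hlow, hhigh⟩).mono_set fun s hs => ?_
  rcases lt_or_ge s (sInf S) with h | h
  exacts [Or.inl ⟨hs, h⟩, Or.inr h]

lemma norm_integral_Ioi_mul_exp_le [NormedSpace ℝ E] {F : ℝ → E} {l C t : ℝ} (hl : 0 < l)
    (hF : ∀ s > t, ‖F s‖ ≤ C * Real.exp (-l * s)) :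
    ‖∫ s in Ioi t, F s‖ * Real.exp (l * t) ≤ C / l := by
  have hint : ∫ s in Ioi t, C * Real.exp (-l * s) = C * Real.exp (-l * t) / l := by
    rw [integral_const_mul, integral_exp_mul_Ioi (neg_neg_of_pos hl)]
    field_simp
  calc ‖∫ s in Ioi t, F s‖ * Real.exp (l * t)
      ≤ (∫ s in Ioi t, C * Real.exp (-l * s)) * Real.exp (l * t) := by
        gcongr
        exact norm_integral_le_of_norm_le ((exp_neg_integrableOn_Ioi t hl).const_mul C)
          ((ae_restrict_iff' measurableSet_Ioi).2 (Eventually.of_forall hF))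
    _ = C / l := by
        rw [hint, div_mul_eq_mul_div, mul_assoc, ← Real.exp_add]
        simp

end TailIntegrals

def imExpMulConj (θ : ℝ) (w : ℂ) : ℝ :=
  (Complex.exp (Complex.I * θ) * starRingEnd ℂ w).im

lemma abs_imExpMulConj_le (θ : ℝ) (w : ℂ) : |imExpMulConj θ w| ≤ ‖w‖ :=
  (Complex.abs_im_le_norm _).trans_eq <| by
    rw [norm_mul, Complex.norm_conj, Complex.norm_exp_I_mul_ofReal, one_mul]

lemma norm_exp_I_mul_ofReal_sub_exp_I_mul_ofReal_le (a b : ℝ) :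
    ‖Complex.exp (Complex.I * a) - Complex.exp (Complex.I * b)‖ ≤ |a - b| := by
  have : Complex.exp (Complex.I * a) - Complex.exp (Complex.I * b)
      = Complex.exp (Complex.I * b) * (Complex.exp (Complex.I * (a - b : ℝ)) - 1) := by
    rw [mul_sub, ← Complex.exp_add]; push_cast; ring_nf
  rw [this, norm_mul, Complex.norm_exp_I_mul_ofReal, one_mul, ← Real.norm_eq_abs]
  exact Real.norm_exp_I_mul_ofReal_sub_one_le

lemma abs_imExpMulConj_sub_le (θ θ' : ℝ) (w w' : ℂ) :
    |imExpMulConj θ w - imExpMulConj θ' w'| ≤ |θ - θ'| * ‖w‖ + ‖w - w'‖ := by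
  have : imExpMulConj θ w - imExpMulConj θ' w'
      = ((Complex.exp (Complex.I * θ) - Complex.exp (Complex.I * θ')) * starRingEnd ℂ w).im
        + imExpMulConj θ' (w - w') := by
    simp only [imExpMulConj, map_sub, ← Complex.sub_im, ← Complex.add_im]
    ring_nf
  rw [this]
  refine (abs_add_le _ _).trans (add_le_add ?_ (abs_imExpMulConj_le _ _))
  refine (Complex.abs_im_le_norm _).trans ?_
  rw [norm_mul, Complex.norm_conj]
  gcongr
  exact norm_exp_I_mul_ofReal_sub_exp_I_mul_ofReal_le θ θ'

namespace IsAsymChar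

variable {l μ : ℝ} {z z' : ℝ → ℂ} {Θ Θ' : ℝ → ℝ → ℝ → ℝ}

lemma apply_eq_s5 (hΘ : IsAsymChar μ z Θ) {t : ℝ} (ht : 0 ≤ t) (ϑ ω : ℝ) :
    Θ t ϑ ω = ϑ + ω * t + μ * ∫ s in Ioi t, imExpMulConj (Θ s ϑ ω) (z s) :=
  hΘ t ht ϑ ω

/-- `Θ` is not assumed measurable. But where the tail integral is not integrable it is `0`, and
`Θ` is then the free motion `ϑ + ω s`; this is enough to make the integrand integrable. -/
lemma integrableOn {C : ℝ} (hl : 0 < l) (hz : Measurable z)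
    (hzC : ∀ s, 0 ≤ s → ‖z s‖ ≤ C * Real.exp (-l * s)) (hΘ : IsAsymChar μ z Θ) {t : ℝ}
    (ht : 0 ≤ t) (ϑ ω : ℝ) :
    IntegrableOn (fun s => imExpMulConj (Θ s ϑ ω) (z s)) (Ioi t) := by
  refine integrableOn_Ioi_of_eq_of_not_integrableOn
    ((exp_neg_integrableOn_Ioi t hl).const_mul C)
    (fun s hs => (abs_imExpMulConj_le _ _).trans (hzC s (ht.trans hs.le)))
    (g := fun s => imExpMulConj (ϑ + ω * s) (z s)) ?_ fun s hs hnot => ?_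
  · unfold imExpMulConj
    fun_prop
  · rw [hΘ.apply_eq_s5 (ht.trans hs.le), integral_undef hnot, mul_zero, add_zero]

lemma abs_sub_mul_exp_le_s5 {Z W D : ℝ} (hl : 0 < l) (hμ : 0 ≤ μ) (hz : Measurable z)
    (hz' : Measurable z') (hZ : ∀ s, 0 ≤ s → ‖z s‖ ≤ Z * Real.exp (-l * s))
    (hW : ∀ s, 0 ≤ s → ‖z s - z' s‖ ≤ W * Real.exp (-l * s))
    (hΘ : IsAsymChar μ z Θ) (hΘ' : IsAsymChar μ z' Θ') {ϑ ω : ℝ}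
    (hD : ∀ s, 0 ≤ s → |Θ s ϑ ω - Θ' s ϑ ω| ≤ D * Real.exp (-l * s)) {t : ℝ} (ht : 0 ≤ t) :
    |Θ t ϑ ω - Θ' t ϑ ω| * Real.exp (l * t) ≤ μ * (D * Z + W) / l := by
  have hz'C (s : ℝ) (hs : 0 ≤ s) : ‖z' s‖ ≤ (Z + W) * Real.exp (-l * s) := by
    rw [add_mul]
    exact (norm_le_norm_add_norm_sub (z s) (z' s)).trans (add_le_add (hZ s hs) (hW s hs))
  have hdiff : Θ t ϑ ω - Θ' t ϑ ω
      = μ * ∫ s in Ioi t, (imExpMulConj (Θ s ϑ ω) (z s) - imExpMulConj (Θ' s ϑ ω) (z' s)) := by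
    rw [hΘ.apply_eq_s5 ht, hΘ'.apply_eq_s5 ht, integral_sub (hΘ.integrableOn hl hz hZ ht ϑ ω)
      (hΘ'.integrableOn hl hz' hz'C ht ϑ ω)]
    ring
  have hZ0 : 0 ≤ Z := by simpa using (norm_nonneg _).trans (hZ 0 le_rfl)
  have hD0 : 0 ≤ D := by simpa using (abs_nonneg _).trans (hD 0 le_rfl)
  rw [hdiff, abs_mul, abs_of_nonneg hμ, mul_assoc, mul_div_assoc]
  gcongr
  refine norm_integral_Ioi_mul_exp_le (E := ℝ) hl fun s hs => ?_
  have hs0 : 0 ≤ s := ht.trans hs.le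
  have hexp : Real.exp (-l * s) ≤ 1 := Real.exp_le_one_iff.2 (by nlinarith)
  rw [Real.norm_eq_abs]
  calc _ ≤ |Θ s ϑ ω - Θ' s ϑ ω| * ‖z s‖ + ‖z s - z' s‖ := abs_imExpMulConj_sub_le _ _ _ _
    _ ≤ D * Real.exp (-l * s) * (Z * Real.exp (-l * s)) + W * Real.exp (-l * s) := by
        gcongr; exacts [hD s hs0, hZ s hs0, hW s hs0]
    _ ≤ D * Real.exp (-l * s) * Z + W * Real.exp (-l * s) := by
        gcongr
        exact mul_le_of_le_one_right hZ0 hexp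
    _ = (D * Z + W) * Real.exp (-l * s) := by ring

end IsAsymChar

/-- Estimate for the difference of two asymptotic characteristics (Lemma 3 of the paper). -/
theorem asymChar_diff_exp
    (l μ : ℝ) (hl : 0 < l) (hμ : 0 < μ) (z z' : ℝ → ℂ)
    (hz : Measurable z) (hz' : Measurable z')
    (hzb : ExpBddZ l z) (hz'b : ExpBddZ l z') (hsmall : μ * expNormZ l z < l)
    (Θ Θ' : ℝ → ℝ → ℝ → ℝ) (hΘ : IsAsymChar μ z Θ) (hΘ' : IsAsymChar μ z' Θ')
    (hΘb : ExpBddH l (fun t ϑ ω => ((Θ t ϑ ω - ϑ - ω * t : ℝ) : ℂ)))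
    (hΘ'b : ExpBddH l (fun t ϑ ω => ((Θ' t ϑ ω - ϑ - ω * t : ℝ) : ℂ))) :
    expNormH l (fun t ϑ ω => ((Θ t ϑ ω - Θ' t ϑ ω : ℝ) : ℂ)) ≤
      μ * expNormZ l (fun t => z t - z' t) / (l * (1 - μ / l * expNormZ l z)) := by
  set Z := expNormZ l z
  set W := expNormZ l (fun t => z t - z' t)
  set D := expNormH l (fun t ϑ ω => ((Θ t ϑ ω - Θ' t ϑ ω : ℝ) : ℂ))
  have hDbdd : ExpBddH l (fun t ϑ ω => ((Θ t ϑ ω - Θ' t ϑ ω : ℝ) : ℂ)) := by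
    convert hΘb.sub hΘ'b using 4
    push_cast
    ring
  have hD_le : D ≤ μ * (D * Z + W) / l := expNormH_le fun t ht ϑ ω => by
    simpa only [Complex.norm_real, Real.norm_eq_abs] using
      IsAsymChar.abs_sub_mul_exp_le_s5 hl hμ.le hz hz' (fun s hs => hzb.norm_le hs)
        (fun s hs => (hzb.sub hz'b).norm_le hs) hΘ hΘ'
        (fun s hs => by
          simpa only [Complex.norm_real, Real.norm_eq_abs] using hDbdd.norm_le hs ϑ ω) ht
  rw [le_div_iff₀ hl] at hD_le
  rw [show l * (1 - μ / l * Z) = l - μ * Z by field_simp, le_div_iff₀ (by linarith)]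
  linarith
end
end

section
/- Let λ>0, μ>0, let z:[0,∞)→ℂ be measurable with ‖z‖_λ < ∞, and let Θ:[0,∞)×ℝ×ℝ→ℝ satisfy ‖Θ(t,ϑ,ω) − ϑ − ωt‖_λ < ∞. Let f_∞:ℝ×ℝ→[0,∞) be bounded and continuously differentiable with bounded gradient. Define g(t,ϑ,ω) := f_∞(ϑ,ω) exp(−μ ∫_t^∞ Re(e^{iΘ(s,ϑ,ω)} · conj(z(s))) ds). Then there exists a constant C>0 such that for all t≥0: sup_{ϑ,ω} |g(t,ϑ,ω) − f_∞(Θ(t,ϑ,ω) − ωt, ω)| ≤ C e^{−λt}. -/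
open MeasureTheory

noncomputable section

/-!
Write `I(t) = ∫_t^∞ Re(e^{iΘ} z̄)`. Since `|z(s)| ≤ M e^{-λs}`, `|I(t)| ≤ (M/λ) e^{-λt}`, so the
factor `exp(-μ I(t))` is within `O(e^{-λt})` of `1` and, `f_∞` being bounded, `g(t)` is within
`O(e^{-λt})` of `f_∞(ϑ, ω)`. Finally `f_∞` is Lipschitz by the mean value theorem and
`|Θ(t) - ωt - ϑ| = O(e^{-λt})`.
-/

open Real Set

lemma le_mul_exp_neg_of_mul_exp_le {a M l t : ℝ} (h : a * exp (l * t) ≤ M) :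
    a ≤ M * exp (-l * t) := by
  rwa [neg_mul, exp_neg, ← div_eq_mul_inv, le_div_iff₀ (exp_pos _)]

lemma ExpBddZ.exists_norm_le {l : ℝ} {z : ℝ → ℂ} (hz : ExpBddZ l z) :
    ∃ M ≥ (0 : ℝ), ∀ t, 0 ≤ t → ‖z t‖ ≤ M * exp (-l * t) := by
  obtain ⟨M, hM⟩ := hz
  refine ⟨M, le_trans (by positivity) (hM ⟨⟨0, le_rfl⟩, rfl⟩), fun t ht => ?_⟩
  exact le_mul_exp_neg_of_mul_exp_le (hM ⟨⟨t, ht⟩, rfl⟩)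

lemma ExpBddH.exists_norm_le {l : ℝ} {h : ℝ → ℝ → ℝ → ℂ} (hh : ExpBddH l h) :
    ∃ M ≥ (0 : ℝ), ∀ t, 0 ≤ t → ∀ ϑ ω, ‖h t ϑ ω‖ ≤ M * exp (-l * t) := by
  obtain ⟨M, hM⟩ := hh
  refine ⟨M, le_trans (by positivity) (hM ⟨⟨⟨0, le_rfl⟩, 0, 0⟩, rfl⟩), fun t ht ϑ ω => ?_⟩
  exact le_mul_exp_neg_of_mul_exp_le (hM ⟨⟨⟨t, ht⟩, ϑ, ω⟩, rfl⟩)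

lemma norm_setIntegral_Ioi_le_of_norm_le_exp {E : Type*} [NormedAddCommGroup E]
    [NormedSpace ℝ E] {F : ℝ → E} {M l t : ℝ} (hl : 0 < l)
    (hF : ∀ s > t, ‖F s‖ ≤ M * exp (-l * s)) :
    ‖∫ s in Ioi t, F s‖ ≤ M / l * exp (-l * t) := by
  have hbound : ∀ᵐ s ∂(volume.restrict (Ioi t)), ‖F s‖ ≤ M * exp (-l * s) :=
    (ae_restrict_mem measurableSet_Ioi).mono hF
  calc ‖∫ s in Ioi t, F s‖ ≤ ∫ s in Ioi t, M * exp (-l * s) :=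
        norm_integral_le_of_norm_le
          ((exp_neg_integrableOn_Ioi t hl).const_mul M) hbound
    _ = M / l * exp (-l * t) := by
        rw [integral_const_mul, integral_exp_mul_Ioi (neg_lt_zero.2 hl)]
        field_simp

lemma abs_exp_sub_one_le_mul_exp_abs (x : ℝ) : |exp x - 1| ≤ |x| * exp |x| := by
  have hx : x ∈ Icc (-|x|) |x| := abs_le.mp le_rfl
  have h0 : (0 : ℝ) ∈ Icc (-|x|) |x| := ⟨neg_nonpos.2 (abs_nonneg x), abs_nonneg x⟩
  have hderiv : ∀ y ∈ Icc (-|x|) |x|, ‖deriv exp y‖ ≤ exp |x| := fun y hy => by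
    rw [Real.deriv_exp, norm_of_nonneg (exp_pos y).le]
    exact exp_le_exp.2 hy.2
  simpa [mul_comm] using (convex_Icc _ _).norm_image_sub_le_of_norm_deriv_le
    (fun y _ => differentiableAt_exp) hderiv h0 hx

lemma abs_exp_sub_one_le_of_abs_le {x a ε : ℝ} (ha : 0 ≤ a) (hε : ε ≤ 1)
    (hx : |x| ≤ a * ε) : |exp x - 1| ≤ a * exp a * ε := by
  have hxa : |x| ≤ a := hx.trans (mul_le_of_le_one_right ha hε)
  calc |exp x - 1| ≤ |x| * exp |x| := abs_exp_sub_one_le_mul_exp_abs x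
    _ ≤ a * ε * exp a := by gcongr; exact (abs_nonneg x).trans hx
    _ = a * exp a * ε := by ring

lemma abs_mul_exp_sub_le {a b x B : ℝ} (ha : 0 ≤ a) (haB : a ≤ B) :
    |a * exp x - b| ≤ B * |exp x - 1| + |a - b| :=
  calc |a * exp x - b| = |a * (exp x - 1) + (a - b)| := by ring_nf
    _ ≤ a * |exp x - 1| + |a - b| := by
        simpa only [abs_mul, abs_of_nonneg ha] using abs_add_le (a * (exp x - 1)) (a - b)
    _ ≤ B * |exp x - 1| + |a - b| := by gcongr

lemma abs_re_exp_I_mul_mul_conj_le (θ : ℝ) (w : ℂ) :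
    |(Complex.exp (Complex.I * θ) * (starRingEnd ℂ) w).re| ≤ ‖w‖ := by
  calc |(Complex.exp (Complex.I * θ) * (starRingEnd ℂ) w).re|
      ≤ ‖Complex.exp (Complex.I * θ) * (starRingEnd ℂ) w‖ := Complex.abs_re_le_norm _
    _ = ‖w‖ := by
        rw [norm_mul, mul_comm Complex.I, Complex.norm_exp_ofReal_mul_I, Complex.norm_conj,
          one_mul]

lemma abs_sub_le_of_norm_fderiv_uncurry_le {f : ℝ → ℝ → ℝ} {K : ℝ}
    (hf : Differentiable ℝ (fun p : ℝ × ℝ => f p.1 p.2))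
    (hK : ∀ p : ℝ × ℝ, ‖fderiv ℝ (fun q : ℝ × ℝ => f q.1 q.2) p‖ ≤ K) (a b ω : ℝ) :
    |f a ω - f b ω| ≤ K * |a - b| := by
  simpa [Prod.norm_def] using convex_univ.norm_image_sub_le_of_norm_fderiv_le
    (fun p _ => hf p) (fun p _ => hK p) (mem_univ (b, ω)) (mem_univ (a, ω))

theorem solution_close_to_free_flow_exp_general
    (l μ : ℝ) (hl : 0 < l) (z : ℝ → ℂ)
    (hzb : ExpBddZ l z) (Θ : ℝ → ℝ → ℝ → ℝ)
    (hΘb : ExpBddH l (fun t ϑ ω => ((Θ t ϑ ω - ϑ - ω * t : ℝ) : ℂ)))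
    (f : ℝ → ℝ → ℝ) (hf0 : ∀ ϑ ω : ℝ, 0 ≤ f ϑ ω)
    (hfb : ∃ B : ℝ, ∀ ϑ ω : ℝ, f ϑ ω ≤ B)
    (hreg : ContDiff ℝ 1 (fun p : ℝ × ℝ => f p.1 p.2))
    (hgrad : ∃ K : ℝ, ∀ p : ℝ × ℝ, ‖fderiv ℝ (fun q : ℝ × ℝ => f q.1 q.2) p‖ ≤ K) :
    ∃ C > (0 : ℝ), ∀ t : ℝ, 0 ≤ t → ∀ ϑ ω : ℝ,
      |f ϑ ω * Real.exp (-μ * ∫ s in Set.Ioi t,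
          (Complex.exp (Complex.I * (Θ s ϑ ω : ℂ)) * (starRingEnd ℂ) (z s)).re)
        - f (Θ t ϑ ω - ω * t) ω| ≤ C * Real.exp (-l * t) := by
  obtain ⟨B, hB⟩ := hfb
  obtain ⟨K, hK⟩ := hgrad
  obtain ⟨Mz, hMz0, hMz⟩ := hzb.exists_norm_le
  obtain ⟨MΘ, hMΘ0, hMΘ⟩ := hΘb.exists_norm_le
  have hB0 : 0 ≤ B := (hf0 0 0).trans (hB 0 0)
  have hK0 : 0 ≤ K := (norm_nonneg _).trans (hK 0)
  set A := |μ| * Mz / l with hA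
  refine ⟨B * (A * exp A) + K * MΘ + 1, by positivity, fun t ht ϑ ω => ?_⟩
  have hdecay : exp (-l * t) ≤ 1 := exp_le_one_iff.2 (by nlinarith)
  set I := ∫ s in Ioi t, (Complex.exp (Complex.I * (Θ s ϑ ω : ℂ)) * (starRingEnd ℂ) (z s)).re
  have hI : ‖I‖ ≤ Mz / l * exp (-l * t) :=
    norm_setIntegral_Ioi_le_of_norm_le_exp hl fun s hs =>
      (abs_re_exp_I_mul_mul_conj_le _ _).trans (hMz s (ht.trans hs.le))
  have hexp : |exp (-μ * I) - 1| ≤ A * exp A * exp (-l * t) := by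
    refine abs_exp_sub_one_le_of_abs_le (by positivity) hdecay ?_
    calc |-μ * I| = |μ| * ‖I‖ := by rw [abs_mul, abs_neg, Real.norm_eq_abs]
      _ ≤ |μ| * (Mz / l * exp (-l * t)) := by gcongr
      _ = A * exp (-l * t) := by rw [hA]; ring
  have hflow : |f ϑ ω - f (Θ t ϑ ω - ω * t) ω| ≤ K * (MΘ * exp (-l * t)) := by
    refine (abs_sub_le_of_norm_fderiv_uncurry_le (hreg.differentiable one_ne_zero) hK _ _ _).trans
      (mul_le_mul_of_nonneg_left ?_ hK0)
    rw [abs_sub_comm, sub_right_comm]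
    simpa only [Complex.norm_real, Real.norm_eq_abs] using hMΘ t ht ϑ ω
  calc _ ≤ B * |exp (-μ * I) - 1| + |f ϑ ω - f (Θ t ϑ ω - ω * t) ω| :=
        abs_mul_exp_sub_le (hf0 ϑ ω) (hB ϑ ω)
    _ ≤ B * (A * exp A * exp (-l * t)) + K * (MΘ * exp (-l * t)) := by gcongr
    _ ≤ (B * (A * exp A) + K * MΘ + 1) * exp (-l * t) := by nlinarith [exp_pos (-l * t)]

/-- The solution along characteristics stays exponentially close to the free flow
of the asymptotic state. -/
theorem solution_close_to_free_flow_exp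
    (l μ : ℝ) (hl : 0 < l) (hμ : 0 < μ) (z : ℝ → ℂ) (hz : Measurable z)
    (hzb : ExpBddZ l z) (Θ : ℝ → ℝ → ℝ → ℝ)
    (hΘb : ExpBddH l (fun t ϑ ω => ((Θ t ϑ ω - ϑ - ω * t : ℝ) : ℂ)))
    (f : ℝ → ℝ → ℝ) (hf0 : ∀ ϑ ω : ℝ, 0 ≤ f ϑ ω)
    (hfb : ∃ B : ℝ, ∀ ϑ ω : ℝ, f ϑ ω ≤ B)
    (hreg : ContDiff ℝ 1 (fun p : ℝ × ℝ => f p.1 p.2))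
    (hgrad : ∃ K : ℝ, ∀ p : ℝ × ℝ, ‖fderiv ℝ (fun q : ℝ × ℝ => f q.1 q.2) p‖ ≤ K) :
    ∃ C > (0 : ℝ), ∀ t : ℝ, 0 ≤ t → ∀ ϑ ω : ℝ,
      |f ϑ ω * Real.exp (-μ * ∫ s in Set.Ioi t,
          (Complex.exp (Complex.I * (Θ s ϑ ω : ℂ)) * (starRingEnd ℂ) (z s)).re)
        - f (Θ t ϑ ω - ω * t) ω| ≤ C * Real.exp (-l * t) :=
  solution_close_to_free_flow_exp_general l μ hl z hzb Θ hΘb f hf0 hfb hreg hgrad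

end
end
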